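/- arXiv:1507.02337 — 2 statements merged into one kernel-verified Lean document; each statement's English description precedes it below -/
import Mathlib

section
/- Let A be a unital B_0-algebra with an orthogonal basis (e_n). If x = Σ t_n e_n ∈ A where t_n are real, t_n ≤ t_{n+1}, and t_n → ∞, then f(x) is real for every nonzero multiplicative linear functional f on A. -/
/-!
Suppose `μ = f x` is not real. Then `t n - μ` never vanishes and the resolvent
`z = ∑ (t n - μ)⁻¹ • e n` exists in `A`: its coefficients are `w n * t n` with
`w n = μ⁻¹ * ((t n - μ)⁻¹ - (t n)⁻¹)`, a difference of two resolvent sequences, each of bounded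
variation because `t` increases to `∞`, and Abel summation against the convergent series
`∑ t n • e n` gives convergence in the complete locally convex space `A`.
By orthogonality the coefficients of `(z * x - μ • z) * x` are those of `x`, so this element is `x`;
applying `f` gives `(f z * μ - μ * f z) * μ = μ`, i.e. `μ = 0`, a contradiction.
-/

open Filter Topology

/-- `x = Σ_{n} a n • e n` as convergence of ordered partial sums. -/
def HasExpansion {A : Type*} [AddCommMonoid A] [Module ℂ A] [TopologicalSpace A]
    (a : ℕ → ℂ) (e : ℕ → A) (x : A) : Prop :=
  Tendsto (fun N => ∑ n ∈ Finset.range N, a n • e n) atTop (𝓝 x)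

section Seminorms

variable {𝕜 E ι : Type*} [NormedField 𝕜] [AddCommGroup E] [Module 𝕜 E]
  [UniformSpace E] [IsUniformAddGroup E] {p : SeminormFamily 𝕜 E ι}

theorem WithSeminorms.summable_of_summable_seminorm [CompleteSpace E] (hp : WithSeminorms p)
    {β : Type*} {y : β → E} (hy : ∀ i, Summable fun k => p i (y k)) : Summable y := by
  rw [summable_iff_vanishing]
  intro U hU
  obtain ⟨⟨s, r⟩, hr, hball⟩ := hp.hasBasis_zero_ball.mem_iff.1 hU
  obtain ⟨F, hF⟩ := (summable_sum fun i _ => hy i).vanishing (Iio_mem_nhds hr)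
  refine ⟨F, fun T hT => hball ?_⟩
  rw [Seminorm.mem_ball_zero]
  calc (s.sup p) (∑ k ∈ T, y k) ≤ ∑ k ∈ T, (s.sup p) (y k) :=
        Finset.le_sum_of_subadditive _ (map_zero _).le (map_add_le_add _) T y
    _ ≤ ∑ k ∈ T, ∑ i ∈ s, p i (y k) :=
        Finset.sum_le_sum fun k _ => Seminorm.finset_sup_apply_le
          (Finset.sum_nonneg fun i _ => apply_nonneg _ _)
          fun i hi => Finset.single_le_sum (fun j _ => apply_nonneg (p j) (y k)) hi
    _ < r := hF T hT

theorem WithSeminorms.exists_tendsto_sum_smul [CompleteSpace 𝕜] [CompleteSpace E]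
    [ContinuousSMul 𝕜 E] (hp : WithSeminorms p) {a : ℕ → E} {s : E}
    (ha : Tendsto (fun N => ∑ k ∈ Finset.range N, a k) atTop (𝓝 s)) {w : ℕ → 𝕜}
    (hw : Summable fun k => ‖w (k + 1) - w k‖) :
    ∃ z, Tendsto (fun N => ∑ k ∈ Finset.range N, w k • a k) atTop (𝓝 z) := by
  set S := fun N => ∑ k ∈ Finset.range N, a k
  obtain ⟨w₀, hw₀⟩ := cauchySeq_tendsto_of_complete <|
    cauchySeq_of_summable_dist (f := w) (by simpa only [dist_eq_norm'] using hw)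
  have hsum : Summable fun k => (w (k + 1) - w k) • S (k + 1) := by
    refine hp.summable_of_summable_seminorm fun i => ?_
    obtain ⟨B, hB⟩ := ((hp.continuous_seminorm i).tendsto s |>.comp ha).bddAbove_range
    refine Summable.of_nonneg_of_le (fun _ => apply_nonneg _ _) (fun k => ?_) (hw.mul_right B)
    rw [map_smul_eq_mul]
    exact mul_le_mul_of_nonneg_left (hB ⟨k + 1, rfl⟩) (norm_nonneg _)
  refine ⟨w₀ • s - ∑' k, (w (k + 1) - w k) • S (k + 1), ?_⟩
  have hparts : ∀ N, w N • S (N + 1) - ∑ k ∈ Finset.range N, (w (k + 1) - w k) • S (k + 1)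
      = ∑ k ∈ Finset.range (N + 1), w k • a k := fun N => by
    simpa using (Finset.sum_range_by_parts w a (N + 1)).symm
  rw [← tendsto_add_atTop_iff_nat 1]
  exact ((hw₀.smul (ha.comp (tendsto_add_atTop_nat 1))).sub hsum.hasSum.tendsto_sum_nat).congr
    hparts

end Seminorms

section Multiplication

variable {𝕜 A ι : Type*} [NormedField 𝕜] [NonUnitalRing A] [Module 𝕜 A] [TopologicalSpace A]
  {p : SeminormFamily 𝕜 A ι}

theorem WithSeminorms.tendsto_nhds_iff_seminorm (hp : WithSeminorms p) {α : Type*}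
    {l : Filter α} {u : α → A} {y : A} :
    Tendsto u l (𝓝 y) ↔ ∀ i, Tendsto (fun n => p i (u n - y)) l (𝓝 0) := by
  have := hp.topologicalAddGroup
  refine ⟨fun h i => ?_, fun h => (hp.tendsto_nhds u y).2 fun i ε hε => (h i).eventually
    (gt_mem_nhds hε)⟩
  exact ((hp.continuous_seminorm i).tendsto' 0 0 (map_zero _)).comp (tendsto_sub_nhds_zero_iff.2 h)

theorem WithSeminorms.continuousMul (hp : WithSeminorms p)
    (hmul : ∀ i, ∃ j, ∀ x y, p i (x * y) ≤ p j x * p j y) : ContinuousMul A := by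
  refine ⟨continuous_iff_continuousAt.2 fun ⟨y, z⟩ => ?_⟩
  rw [ContinuousAt, hp.tendsto_nhds_iff_seminorm]
  intro i
  obtain ⟨j, hj⟩ := hmul i
  have h₁ := hp.tendsto_nhds_iff_seminorm.1 (continuousAt_fst (p := (y, z))) j
  have h₂ := hp.tendsto_nhds_iff_seminorm.1 (continuousAt_snd (p := (y, z))) j
  refine squeeze_zero (fun _ => apply_nonneg _ _) (fun q => ?_)
    (by simpa using ((h₁.mul h₂).add (h₁.mul_const (p j z))).add (h₂.const_mul (p j y)))
  calc p i (q.1 * q.2 - y * z)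
      = p i ((q.1 - y) * (q.2 - z) + (q.1 - y) * z + y * (q.2 - z)) := by
        congr 1; noncomm_ring
    _ ≤ p j (q.1 - y) * p j (q.2 - z) + p j (q.1 - y) * p j z + p j y * p j (q.2 - z) :=
        (map_add_le_add _ _ _).trans <| add_le_add ((map_add_le_add _ _ _).trans <|
          add_le_add (hj _ _) (hj _ _)) (hj _ _)

end Multiplication

theorem sum_smul_mul_sum_smul_of_orthogonal {A : Type*} [NonUnitalRing A] [Module ℂ A]
    [IsScalarTower ℂ A A] [SMulCommClass ℂ A A] {e : ℕ → A} (a b : ℕ → ℂ)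
    (horth : ∀ i j, e i * e j = if i = j then e i else 0) (N : ℕ) :
    (∑ n ∈ Finset.range N, a n • e n) * (∑ n ∈ Finset.range N, b n • e n)
      = ∑ n ∈ Finset.range N, (a n * b n) • e n := by
  simp only [Finset.sum_mul_sum, smul_mul_smul_comm, horth, smul_ite, smul_zero,
    Finset.sum_ite_eq, Finset.mem_range]
  exact Finset.sum_congr rfl fun n hn => if_pos (Finset.mem_range.1 hn)

namespace HasExpansion

variable {A : Type*} [AddCommGroup A] [Module ℂ A] [TopologicalSpace A] {e : ℕ → A}
  {a b : ℕ → ℂ} {y z : A}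

theorem sub [IsTopologicalAddGroup A] (ha : HasExpansion a e y) (hb : HasExpansion b e z) :
    HasExpansion (fun k => a k - b k) e (y - z) := by
  simpa only [HasExpansion, sub_smul, Finset.sum_sub_distrib] using Filter.Tendsto.sub ha hb

theorem const_smul [ContinuousConstSMul ℂ A] (ha : HasExpansion a e y) (c : ℂ) :
    HasExpansion (fun k => c * a k) e (c • y) := by
  simpa only [HasExpansion, mul_smul, Finset.smul_sum] using Filter.Tendsto.const_smul ha c

end HasExpansion

theorem HasExpansion.mul {A : Type*} [NonUnitalRing A] [Module ℂ A] [TopologicalSpace A]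
    [ContinuousMul A] [IsScalarTower ℂ A A] [SMulCommClass ℂ A A] {e : ℕ → A} {a b : ℕ → ℂ}
    {y z : A} (horth : ∀ i j, e i * e j = if i = j then e i else 0)
    (ha : HasExpansion a e y) (hb : HasExpansion b e z) :
    HasExpansion (fun k => a k * b k) e (y * z) := by
  simpa only [HasExpansion, sum_smul_mul_sum_smul_of_orthogonal a b horth] using
    Filter.Tendsto.mul ha hb

theorem norm_inv_sub_inv_le_inv_sub_inv {s s' : ℝ} {μ : ℂ} (hs : μ.re < s) (hss' : s ≤ s') :
    ‖((s' : ℂ) - μ)⁻¹ - ((s : ℂ) - μ)⁻¹‖ ≤ (s - μ.re)⁻¹ - (s' - μ.re)⁻¹ := by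
  have hre : ∀ r : ℝ, r - μ.re ≤ ‖(r : ℂ) - μ‖ := fun r => by
    simpa using Complex.re_le_norm ((r : ℂ) - μ)
  have hpos : 0 < s - μ.re := sub_pos.2 hs
  have hpos' : 0 < s' - μ.re := by linarith
  have hne : ∀ r : ℝ, 0 < r - μ.re → (r : ℂ) - μ ≠ 0 := fun r hr h0 => by
    simpa [h0] using hr.trans_le (hre r)
  rw [inv_sub_inv (hne s' hpos') (hne s hpos), inv_sub_inv hpos.ne' hpos'.ne', norm_div,
    norm_mul, sub_sub_sub_cancel_right, sub_sub_sub_cancel_right, ← Complex.ofReal_sub,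
    Complex.norm_real, Real.norm_eq_abs, abs_sub_comm, abs_of_nonneg (sub_nonneg.2 hss'),
    mul_comm ‖_‖]
  exact div_le_div_of_nonneg_left (sub_nonneg.2 hss') (mul_pos hpos hpos')
    (mul_le_mul (hre s) (hre s') hpos'.le (norm_nonneg _))

theorem summable_norm_inv_sub_sub {t : ℕ → ℝ} (ht : Monotone t) (htop : Tendsto t atTop atTop)
    (μ : ℂ) : Summable fun k => ‖((t (k + 1) : ℂ) - μ)⁻¹ - ((t k : ℂ) - μ)⁻¹‖ := by
  obtain ⟨N, hN⟩ := eventually_atTop.1 (htop.eventually_gt_atTop μ.re)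
  rw [← summable_nat_add_iff N]
  refine summable_of_sum_range_le (c := (t N - μ.re)⁻¹) (fun _ => norm_nonneg _) fun n => ?_
  calc ∑ k ∈ Finset.range n, ‖((t (k + N + 1) : ℂ) - μ)⁻¹ - ((t (k + N) : ℂ) - μ)⁻¹‖
      ≤ ∑ k ∈ Finset.range n, ((t (k + N) - μ.re)⁻¹ - (t (k + 1 + N) - μ.re)⁻¹) :=
        Finset.sum_le_sum fun k _ => by
          rw [add_right_comm]
          exact norm_inv_sub_inv_le_inv_sub_inv (hN _ (by omega)) (ht (by omega))
    _ = (t N - μ.re)⁻¹ - (t (n + N) - μ.re)⁻¹ := by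
        simpa using Finset.sum_range_sub' (fun k => (t (k + N) - μ.re)⁻¹) n
    _ ≤ (t N - μ.re)⁻¹ :=
        sub_le_self _ (inv_nonneg.2 (sub_nonneg.2 (hN _ (by omega)).le))

/-- For `s ≠ 0` this is `((s - μ) * s)⁻¹`, so `resolventWeight μ s * s = (s - μ)⁻¹`. At `s = 0`
that product is `0` instead, which is harmless because it only ever gets multiplied by `s` again. -/
noncomputable def resolventWeight (μ : ℂ) (s : ℝ) : ℂ := μ⁻¹ * (((s : ℂ) - μ)⁻¹ - (s : ℂ)⁻¹)

theorem summable_norm_sub_resolventWeight {t : ℕ → ℝ} (ht : Monotone t)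
    (htop : Tendsto t atTop atTop) (μ : ℂ) :
    Summable fun k => ‖resolventWeight μ (t (k + 1)) - resolventWeight μ (t k)‖ := by
  have h₀ := summable_norm_inv_sub_sub ht htop 0
  simp only [sub_zero] at h₀
  refine (((summable_norm_inv_sub_sub ht htop μ).add h₀).mul_left ‖μ⁻¹‖).of_nonneg_of_le
    (fun _ => norm_nonneg _) fun k => ?_
  rw [resolventWeight, resolventWeight, ← mul_sub, norm_mul, sub_sub_sub_comm]
  exact mul_le_mul_of_nonneg_left (norm_sub_le _ _) (norm_nonneg _)

theorem resolventWeight_mul_mul_sub_mul {μ : ℂ} (hμ : μ.im ≠ 0) (s : ℝ) :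
    resolventWeight μ s * s * (s - μ) * s = s := by
  have hμ₀ : μ ≠ 0 := fun h => hμ (by simp [h])
  have hsμ : (s : ℂ) - μ ≠ 0 := fun h => hμ (by simpa using congrArg Complex.im h)
  rcases eq_or_ne (s : ℂ) 0 with hs | hs
  · simp [hs]
  · rw [resolventWeight]
    field_simp
    ring

theorem stmt6_general {A : Type*} [Ring A] [Algebra ℂ A] [UniformSpace A] [T2Space A]
    [IsUniformAddGroup A] [ContinuousSMul ℂ A] [CompleteSpace A]
    (p : ℕ → Seminorm ℂ A) (hp : WithSeminorms p)
    (hsub : ∀ i x y, p i (x * y) ≤ p (i + 1) x * p (i + 1) y)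
    (e : ℕ → A)
    (horth : ∀ i j, e i * e j = if i = j then e i else 0)
    (t : ℕ → ℝ) (ht : Monotone t) (htop : Tendsto t atTop atTop)
    (x : A) (hx : HasExpansion (fun n => (t n : ℂ)) e x)
    (f : A → ℂ) (hf : IsLinearMap ℂ f) (hfm : ∀ y z, f (y * z) = f y * f z) :
    (f x).im = 0 := by
  by_contra him
  have := hp.continuousMul fun i => ⟨i + 1, hsub i⟩
  obtain ⟨z, hz⟩ := hp.exists_tendsto_sum_smul hx
    (w := fun k => resolventWeight (f x) (t k)) (summable_norm_sub_resolventWeight ht htop (f x))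
  replace hz : HasExpansion (fun k => resolventWeight (f x) (t k) * t k) e z := by
    simpa only [HasExpansion, mul_smul] using hz
  have hux : (z * x - f x • z) * x = x := by
    have h := ((hz.mul horth hx).sub (hz.const_smul (f x))).mul horth hx
    have hcoef : ∀ k, (resolventWeight (f x) (t k) * t k * t k
        - f x * (resolventWeight (f x) (t k) * t k)) * t k = t k := fun k => by
      linear_combination resolventWeight_mul_mul_sub_mul him (t k)
    simp only [hcoef] at h
    exact tendsto_nhds_unique h hx
  have hfux := congrArg f hux
  rw [hfm, hf.map_sub, hfm, hf.map_smul, smul_eq_mul] at hfux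
  have hfx : f x = 0 := by linear_combination -hfux
  exact him (by rw [hfx, Complex.zero_im])

/-- If x = Σ tₙ eₙ with tₙ real increasing to ∞, then f x is real for any nonzero
multiplicative linear functional f. -/
theorem stmt6 {A : Type*} [Ring A] [Algebra ℂ A] [UniformSpace A] [T2Space A]
    [IsUniformAddGroup A] [ContinuousSMul ℂ A] [CompleteSpace A]
    (p : ℕ → Seminorm ℂ A) (hp : WithSeminorms p)
    (hmono : ∀ i x, p i x ≤ p (i + 1) x)
    (hsub : ∀ i x y, p i (x * y) ≤ p (i + 1) x * p (i + 1) y)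
    (e : ℕ → A) (coef : A → ℕ → ℂ)
    (horth : ∀ i j, e i * e j = if i = j then e i else 0)
    (hbasis : ∀ x, HasExpansion (coef x) e x)
    (huniq : ∀ x a, HasExpansion a e x → a = coef x)
    (t : ℕ → ℝ) (ht : Monotone t) (htop : Tendsto t atTop atTop)
    (x : A) (hx : HasExpansion (fun n => (t n : ℂ)) e x)
    (f : A → ℂ) (hf : IsLinearMap ℂ f) (hfm : ∀ y z, f (y * z) = f y * f z)
    (hfne : f ≠ 0) :
    (f x).im = 0 :=
  stmt6_general p hp hsub e horth t ht htop x hx f hf hfm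
end

section
/- Let A be a unital B_0-algebra with an orthogonal basis (e_n). Then every multiplicative linear functional on A is continuous; equivalently, every nonzero multiplicative linear functional equals some coefficient functional e_n^*. -/
/-!
Right multiplication by a basis vector extracts a coefficient, `x * eₙ = eₙ*(x) • eₙ`. Hence a
multiplicative functional `f` with `f eₙ ≠ 0` is `eₙ*`, and `‖eₙ*(x)‖ pᵢ(eₙ) ≤ pᵢ₊₁(x) pᵢ₊₁(eₙ)`
makes it continuous. If instead `f` kills every `eₙ` but `f 1 = 1`, group the expansion
`1 = ∑ eₙ` into finite blocks `bⱼ` decaying like `4⁻ʲ` in every seminorm. Then `∑ cⱼ bⱼ` converges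
whenever `cⱼ = O(2ʲ)`, and such series multiply coefficientwise. For `x = ∑ 2ʲ bⱼ` and `λ = f x`,
the element `x - λ`, corrected on finitely many blocks, has coefficients of modulus at least `1`,
so it is invertible although `f` vanishes on it.
-/

open Filter Topology

open Asymptotics Function

section Seminorms

variable {𝕜 E : Type*} [NormedField 𝕜]

theorem WithSeminorms.continuousMul_of_le_mul [Ring E] [Module 𝕜 E] [TopologicalSpace E]
    {p : ℕ → Seminorm 𝕜 E} (hp : WithSeminorms p)
    (hmul : ∀ i x y, p i (x * y) ≤ p (i + 1) x * p (i + 1) y) : ContinuousMul E := by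
  refine ⟨continuous_iff_continuousAt.2 fun ⟨x, y⟩ => (hp.tendsto_nhds _ _).2 fun i ε hε => ?_⟩
  set q := p (i + 1)
  have := hp.topologicalAddGroup
  have hq : Continuous q := hp.continuous_seminorm (i + 1)
  have hbound : Tendsto (fun z : E × E => q (z.1 - x) * q (z.2 - y) + q (z.1 - x) * q y +
      q x * q (z.2 - y)) (𝓝 (x, y)) (𝓝 0) := by
    have : Continuous fun z : E × E => q (z.1 - x) * q (z.2 - y) + q (z.1 - x) * q y +
        q x * q (z.2 - y) := by fun_prop
    simpa using this.tendsto (x, y)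
  filter_upwards [hbound.eventually (gt_mem_nhds hε)] with z hz
  have hexpand : z.1 * z.2 - x * y = (z.1 - x) * (z.2 - y) + (z.1 - x) * y + x * (z.2 - y) := by
    noncomm_ring
  calc p i (z.1 * z.2 - x * y)
      ≤ p i ((z.1 - x) * (z.2 - y)) + p i ((z.1 - x) * y) + p i (x * (z.2 - y)) := by
        rw [hexpand]
        exact (map_add_le_add _ _ _).trans (add_le_add_left (map_add_le_add _ _ _) _)
    _ ≤ _ := add_le_add (add_le_add (hmul _ _ _) (hmul _ _ _)) (hmul _ _ _)
    _ < ε := hz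

theorem WithSeminorms.continuous_of_mul_eq_smul [Ring E] [Algebra 𝕜 E]
    [TopologicalSpace E] [T1Space E] {p : ℕ → Seminorm 𝕜 E} (hp : WithSeminorms p)
    (hmul : ∀ i x y, p i (x * y) ≤ p (i + 1) x * p (i + 1) y) (φ : E →ₗ[𝕜] 𝕜) {u : E}
    (hu : u ≠ 0) (h : ∀ x, x * u = φ x • u) : Continuous φ := by
  obtain ⟨i, hi⟩ := hp.separating_of_T1 u hu
  have hpos : 0 < p i u := (apply_nonneg _ _).lt_of_ne' hi
  refine WithSeminorms.continuous_normedSpace_rng 𝕜 hp φ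
    ⟨{i + 1}, (p (i + 1) u / p i u).toNNReal, fun x => ?_⟩
  have hle : ‖φ x‖ * p i u ≤ p (i + 1) x * p (i + 1) u := by
    simpa [h, map_smul_eq_mul] using hmul i x u
  simp only [Seminorm.comp_apply, coe_normSeminorm, Finset.sup_singleton, smul_apply,
    NNReal.smul_def, smul_eq_mul, Real.coe_toNNReal _ (by positivity : 0 ≤ p (i + 1) u / p i u)]
  rw [div_mul_eq_mul_div, le_div_iff₀ hpos]
  linarith

theorem WithSeminorms.summable_of_summable_seminorm_s14 [AddCommGroup E] [Module 𝕜 E] [UniformSpace E]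
    [IsUniformAddGroup E] [CompleteSpace E] {p : ℕ → Seminorm 𝕜 E} (hp : WithSeminorms p)
    (hmono : Monotone p) {β : Type*} {f : β → E} (hf : ∀ i, Summable fun j => p i (f j)) :
    Summable f := by
  refine summable_iff_vanishing.2 fun U hU => ?_
  obtain ⟨⟨s, r⟩, hr, hball⟩ := hp.hasBasis_zero_ball.mem_iff.1 hU
  set I := s.sup id
  obtain ⟨s', hs'⟩ := summable_iff_vanishing.1 (hf I) _ (Iio_mem_nhds hr)
  refine ⟨s', fun t ht => hball ?_⟩
  rw [Seminorm.mem_ball_zero]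
  calc s.sup p (∑ j ∈ t, f j) ≤ p I (∑ j ∈ t, f j) :=
        Seminorm.finset_sup_apply_le (apply_nonneg _ _) fun i hi => hmono (s.le_sup (f := id) hi) _
    _ ≤ ∑ j ∈ t, p I (f j) := Finset.le_sum_of_subadditive _ (map_zero _).le (map_add_le_add _) _ _
    _ < r := hs' t ht

theorem WithSeminorms.summable_smul_of_isBigO [AddCommGroup E] [Module 𝕜 E] [UniformSpace E]
    [IsUniformAddGroup E] [CompleteSpace E] {p : ℕ → Seminorm 𝕜 E}
    (hp : WithSeminorms p) (hmono : Monotone p) {b : ℕ → E}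
    (hb : ∀ i, (fun j => p i (b j)) =O[atTop] fun j => (4 : ℝ)⁻¹ ^ j) {c : ℕ → 𝕜}
    (hc : c =O[atTop] fun j => (2 : ℝ) ^ j) : Summable fun j => c j • b j := by
  refine hp.summable_of_summable_seminorm_s14 hmono fun i => ?_
  simp only [map_smul_eq_mul]
  refine summable_of_isBigO_nat summable_geometric_two ((hc.norm_left.mul (hb i)).congr_right ?_)
  intro j
  rw [← mul_pow]
  norm_num

theorem WithSeminorms.exists_blocks_isBigO_pow [AddCommGroup E] [Module 𝕜 E] [TopologicalSpace E]
    {p : ℕ → Seminorm 𝕜 E} (hp : WithSeminorms p) (hmono : Monotone p) {e : ℕ → E} {a : E}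
    (he : Tendsto (fun N => ∑ k ∈ Finset.range N, e k) atTop (𝓝 a)) {r : ℝ} (hr : 0 < r) :
    ∃ s : ℕ → Finset ℕ, Pairwise (Disjoint on s) ∧
      Tendsto (fun N => ∑ j ∈ Finset.range N, ∑ k ∈ s j, e k) atTop (𝓝 a) ∧
      ∀ i, (fun j => p i (∑ k ∈ s j, e k)) =O[atTop] fun j => r ^ j := by
  set S : ℕ → E := fun N => ∑ k ∈ Finset.range N, e k
  have hev (j : ℕ) : ∀ᶠ N in atTop, p j (S N - a) < r ^ j :=
    (hp.tendsto_nhds _ _).1 he j _ (pow_pos hr j)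
  obtain ⟨φ, hφ, hφev⟩ := extraction_forall_of_eventually hev
  -- Start the first block at `0`; the later cut points `φ j` make the tails small.
  set m : ℕ → ℕ := fun j => if j = 0 then 0 else φ j
  have hm_mono : Monotone m := monotone_nat_of_le_succ fun j => by
    rcases j with _ | j
    · simp [m]
    · simpa [m] using hφ.monotone (j + 1).le_succ
  have hm_top : Tendsto m atTop atTop :=
    hφ.tendsto_atTop.congr' <| (eventually_ge_atTop 1).mono fun j hj => by
      simp [m, Nat.one_le_iff_ne_zero.1 hj]
  have htelescope (N : ℕ) :
      ∑ j ∈ Finset.range N, ∑ k ∈ Finset.Ico (m j) (m (j + 1)), e k =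
        ∑ k ∈ Finset.range (m N), e k := by
    induction N with
    | zero => simp [m]
    | succ N ih =>
      rw [Finset.sum_range_succ, ih, Finset.sum_range_add_sum_Ico _ (hm_mono N.le_succ)]
  refine ⟨fun j => Finset.Ico (m j) (m (j + 1)), fun j k hjk => ?_,
    (he.comp hm_top).congr fun N => (htelescope N).symm, fun i => ?_⟩
  · simpa [← Finset.disjoint_coe] using hm_mono.pairwise_disjoint_on_Ico_succ hjk
  refine IsBigO.of_bound (r + 1) ?_
  filter_upwards [eventually_ge_atTop (max i 1)] with j hj
  obtain ⟨hij, hj1⟩ := max_le_iff.1 hj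
  have hmj : m j = φ j := by simp [m, Nat.one_le_iff_ne_zero.1 hj1]
  rw [Finset.sum_Ico_eq_sub _ (hm_mono j.le_succ), hmj, Real.norm_of_nonneg (apply_nonneg _ _),
    norm_pow, Real.norm_of_nonneg hr.le]
  calc p i (S (φ (j + 1)) - S (φ j)) ≤ p i (S (φ (j + 1)) - a) + p i (S (φ j) - a) := by
        simpa using map_sub_le_add (p i) (S (φ (j + 1)) - a) (S (φ j) - a)
    _ ≤ p (j + 1) (S (φ (j + 1)) - a) + p j (S (φ j) - a) :=
        add_le_add (hmono (by omega) _) (hmono hij _)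
    _ ≤ r ^ (j + 1) + r ^ j := add_le_add (hφev _).le (hφev _).le
    _ = (r + 1) * r ^ j := by ring

end Seminorms

theorem one_le_norm_two_pow_sub {z : ℂ} {K j : ℕ} (hK : ‖z‖ + 1 ≤ 2 ^ K) (hj : K ≤ j) :
    1 ≤ ‖(2 : ℂ) ^ j - z‖ := by
  have h2K : (2 : ℝ) ^ K ≤ 2 ^ j := pow_le_pow_right₀ one_le_two hj
  have := norm_sub_norm_le ((2 : ℂ) ^ j) z
  simp only [norm_pow, Complex.norm_ofNat] at this
  linarith

theorem isBigO_pow_of_norm_le_one {𝕜 : Type*} [NormedField 𝕜] {c : ℕ → 𝕜} (hc : ∀ j, ‖c j‖ ≤ 1)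
    {r : ℝ} (hr : 1 ≤ r) : c =O[atTop] fun j => r ^ j :=
  IsBigO.of_bound 1 <| Eventually.of_forall fun j => by
    simpa [abs_of_nonneg (zero_le_one.trans hr)] using (hc j).trans (one_le_pow₀ hr)

namespace OrthogonalIdempotents

variable {R 𝕜 I : Type*} [Semiring R] [CommSemiring 𝕜] [Algebra 𝕜 R] {e : I → R}

theorem sum_smul_mul [DecidableEq I] (he : OrthogonalIdempotents e) (c : I → 𝕜) (s : Finset I)
    (n : I) : (∑ k ∈ s, c k • e k) * e n = if n ∈ s then c n • e n else 0 := by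
  simp [Finset.sum_mul, he.mul_eq]

theorem sum_smul_mul_sum_smul (he : OrthogonalIdempotents e) (c d : I → 𝕜) (s : Finset I) :
    (∑ k ∈ s, c k • e k) * (∑ k ∈ s, d k • e k) = ∑ k ∈ s, (c k * d k) • e k := by
  classical
  simp only [Finset.mul_sum, mul_smul_comm, he.sum_smul_mul]
  simp [smul_smul, mul_comm]

theorem sum_of_pairwise_disjoint {J : Type*} (he : OrthogonalIdempotents e) {s : J → Finset I}
    (hs : Pairwise (Disjoint on s)) : OrthogonalIdempotents fun j => ∑ i ∈ s j, e i := by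
  refine ⟨fun j => he.isIdempotentElem_sum, fun j k hjk => ?_⟩
  simp only [Finset.sum_mul]
  exact Finset.sum_eq_zero fun i hi =>
    he.mul_sum_of_notMem (Finset.disjoint_left.1 (hs hjk) hi)

theorem mul_eq_one_of_hasSum [TopologicalSpace R] [ContinuousMul R] [T2Space R] {b : ℕ → R}
    (hb : OrthogonalIdempotents b) (h1 : Tendsto (fun N => ∑ j ∈ Finset.range N, b j) atTop (𝓝 1))
    {c d : ℕ → 𝕜} {x y : R} (hx : HasSum (fun j => c j • b j) x)
    (hy : HasSum (fun j => d j • b j) y) (hcd : ∀ j, c j * d j = 1) : x * y = 1 := by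
  refine tendsto_nhds_unique ((hx.tendsto_sum_nat.mul hy.tendsto_sum_nat).congr fun N => ?_) h1
  simp [hb.sum_smul_mul_sum_smul, hcd]

variable {A : Type*} [Ring A] [Algebra ℂ A] [TopologicalSpace A] [ContinuousMul A] [T2Space A]
  {b : ℕ → A}

theorem exists_mul_eq_one_of_one_le_norm (hb : OrthogonalIdempotents b)
    (h1 : Tendsto (fun N => ∑ j ∈ Finset.range N, b j) atTop (𝓝 1))
    (hsum : ∀ c : ℕ → ℂ, (c =O[atTop] fun j => (2 : ℝ) ^ j) → Summable fun j => c j • b j)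
    {d : ℕ → ℂ} (hd : ∀ j, 1 ≤ ‖d j‖) {w : A} (hw : HasSum (fun j => d j • b j) w) :
    ∃ y, w * y = 1 := by
  have hinv : Summable fun j => (d j)⁻¹ • b j :=
    hsum _ (isBigO_pow_of_norm_le_one (fun j => by simpa using inv_le_one_of_one_le₀ (hd j))
      one_le_two)
  refine ⟨_, hb.mul_eq_one_of_hasSum h1 hw hinv.hasSum fun j => ?_⟩
  exact mul_inv_cancel₀ (norm_pos_iff.1 (zero_lt_one.trans_le (hd j)))

theorem map_one_eq_zero_of_map_eq_zero [IsTopologicalAddGroup A] (hb : OrthogonalIdempotents b)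
    (h1 : Tendsto (fun N => ∑ j ∈ Finset.range N, b j) atTop (𝓝 1))
    (hsum : ∀ c : ℕ → ℂ, (c =O[atTop] fun j => (2 : ℝ) ^ j) → Summable fun j => c j • b j)
    (φ : A →ₙₐ[ℂ] ℂ) (hφ : ∀ j, φ (b j) = 0) : φ 1 = 0 := by
  by_contra hne
  have hφ1 : φ 1 = 1 := mul_left_cancel₀ hne (by rw [← map_mul, one_mul, mul_one])
  have hb1 : HasSum b 1 := by
    have h := (hsum 1 (isBigO_pow_of_norm_le_one (by simp) one_le_two)).hasSum
    simp only [Pi.one_apply, one_smul] at h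
    rwa [tendsto_nhds_unique h.tendsto_sum_nat h1] at h
  set x := ∑' j, (2 : ℂ) ^ j • b j
  have hx : HasSum (fun j => (2 : ℂ) ^ j • b j) x :=
    (hsum _ (IsBigO.of_bound 1 (Eventually.of_forall fun j => by simp))).hasSum
  set lam := φ x
  obtain ⟨K, hK⟩ := pow_unbounded_of_one_lt (‖lam‖ + 1) one_lt_two
  -- `x - lam • 1` has coefficients `2 ^ j - lam`; replacing them by `1` for `j < K` changes the
  -- element by a finite combination of the `b j`, which `φ` does not see.
  set d : ℕ → ℂ := fun j => if j < K then 1 else (2 : ℂ) ^ j - lam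
  set g : ℕ → ℂ := fun j => d j - ((2 : ℂ) ^ j - lam)
  set w := x - lam • 1 + ∑ j ∈ Finset.range K, g j • b j
  have hd : ∀ j, 1 ≤ ‖d j‖ := fun j => by
    by_cases hj : j < K
    · simp [d, hj]
    · simpa [d, hj] using one_le_norm_two_pow_sub hK.le (not_lt.1 hj)
  have hw : HasSum (fun j => d j • b j) w := by
    have hg : HasSum (fun j => g j • b j) (∑ j ∈ Finset.range K, g j • b j) :=
      hasSum_sum_of_ne_finset_zero fun j hj => by simp [g, d, Finset.mem_range.not.1 hj]
    refine ((hx.sub (hb1.const_smul lam)).add hg).congr_fun fun j => ?_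
    rw [← sub_smul, ← add_smul, add_sub_cancel]
  have hφw : φ w = 0 := by simp [w, map_sum, hφ, hφ1, lam]
  obtain ⟨y, hy⟩ := hb.exists_mul_eq_one_of_one_le_norm h1 hsum hd hw
  have := congrArg φ hy
  rw [map_mul, hφw, zero_mul, hφ1] at this
  exact zero_ne_one this

end OrthogonalIdempotents

section OrthogonalBasis

variable {A : Type*} [Ring A] [Algebra ℂ A] [TopologicalSpace A] {e : ℕ → A}

theorem ne_zero_of_hasExpansion_unique {coef : A → ℕ → ℂ}
    (huniq : ∀ x a, HasExpansion a e x → a = coef x) (n : ℕ) : e n ≠ 0 := by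
  intro hn
  have hzero : HasExpansion 0 e 0 := by simp [HasExpansion, tendsto_const_nhds]
  have hsingle : HasExpansion (Pi.single n 1) e 0 := by
    refine tendsto_const_nhds.congr fun N => (Finset.sum_eq_zero fun k _ => ?_).symm
    rcases eq_or_ne k n with rfl | hk
    · simp [hn]
    · simp [hk]
  simpa using congrFun ((huniq _ _ hsingle).trans (huniq _ _ hzero).symm) n

theorem HasExpansion.mul_basis [ContinuousMul A] [T2Space A] (he : OrthogonalIdempotents e)
    {a : ℕ → ℂ} {x : A} (hx : HasExpansion a e x) (n : ℕ) : x * e n = a n • e n := by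
  refine tendsto_nhds_unique (hx.mul_const (e n)) (tendsto_const_nhds.congr' ?_)
  filter_upwards [eventually_gt_atTop n] with N hN
  simp [he.sum_smul_mul, hN]

theorem HasExpansion.tendsto_sum_basis [ContinuousMul A] [T2Space A]
    (he : OrthogonalIdempotents e) (hne : ∀ n, e n ≠ 0) {a : ℕ → ℂ} (h : HasExpansion a e 1) :
    Tendsto (fun N => ∑ k ∈ Finset.range N, e k) atTop (𝓝 1) := by
  have ha (n : ℕ) : a n = 1 :=
    smul_left_injective ℂ (hne n) (by simpa using (h.mul_basis he n).symm)
  simpa [HasExpansion, ha] using h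

end OrthogonalBasis

theorem NonUnitalAlgHom.eq_of_mul_eq_smul {𝕜 A : Type*} [Field 𝕜] [Ring A] [Algebra 𝕜 A]
    (φ : A →ₙₐ[𝕜] 𝕜) {u : A} (hu : IsIdempotentElem u) {c : A → 𝕜} (hc : ∀ x, x * u = c x • u)
    (hφ : φ u ≠ 0) (x : A) : φ x = c x := by
  have hφu : φ u = 1 := mul_left_cancel₀ hφ (by rw [← map_mul, hu.eq, mul_one])
  calc φ x = φ (x * u) := by rw [map_mul, hφu, mul_one]
    _ = c x := by rw [hc, map_smul, hφu, smul_eq_mul, mul_one]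

theorem NonUnitalAlgHom.eq_zero_of_map_basis_eq_zero {A : Type*} [Ring A] [Algebra ℂ A]
    [UniformSpace A] [IsUniformAddGroup A] [CompleteSpace A] [ContinuousMul A] [T2Space A]
    {p : ℕ → Seminorm ℂ A} (hp : WithSeminorms p) (hmono : Monotone p) {e : ℕ → A}
    (he : OrthogonalIdempotents e) (hone : Tendsto (fun N => ∑ k ∈ Finset.range N, e k) atTop (𝓝 1))
    (φ : A →ₙₐ[ℂ] ℂ) (hφ : ∀ n, φ (e n) = 0) : φ = 0 := by
  obtain ⟨s, hs, hs_one, hs_decay⟩ :=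
    hp.exists_blocks_isBigO_pow hmono hone (r := 4⁻¹) (by norm_num)
  have hφ1 : φ 1 = 0 := (he.sum_of_pairwise_disjoint hs).map_one_eq_zero_of_map_eq_zero hs_one
    (fun _ hc => hp.summable_smul_of_isBigO hmono hs_decay hc) φ fun j => by simp [hφ]
  ext x
  rw [← mul_one x, map_mul, hφ1, mul_zero, NonUnitalAlgHom.zero_apply]

theorem stmt14_general {A : Type*} [Ring A] [Algebra ℂ A] [UniformSpace A] [T2Space A]
    [IsUniformAddGroup A] [CompleteSpace A]
    (p : ℕ → Seminorm ℂ A) (hp : WithSeminorms p)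
    (hmono : ∀ i x, p i x ≤ p (i + 1) x)
    (hsub : ∀ i x y, p i (x * y) ≤ p (i + 1) x * p (i + 1) y)
    (e : ℕ → A) (coef : A → ℕ → ℂ)
    (horth : ∀ i j, e i * e j = if i = j then e i else 0)
    (hbasis : ∀ x, HasExpansion (coef x) e x)
    (huniq : ∀ x a, HasExpansion a e x → a = coef x) :
    ∀ f : A → ℂ, IsLinearMap ℂ f → (∀ x y, f (x * y) = f x * f y) →
      Continuous f ∧ (f ≠ 0 → ∃ n, f = fun x => coef x n) := by
  intro f hlin hmul
  have := hp.continuousMul_of_le_mul hsub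
  have he : OrthogonalIdempotents e := OrthogonalIdempotents.iff_mul_eq.2 horth
  have hne := ne_zero_of_hasExpansion_unique huniq
  let φ : A →ₙₐ[ℂ] ℂ :=
    { toFun := f, map_add' := hlin.map_add, map_smul' := hlin.map_smul,
      map_zero' := hlin.mk'.map_zero, map_mul' := hmul }
  by_cases h : ∀ n, f (e n) = 0
  · have hφ : φ = 0 := φ.eq_zero_of_map_basis_eq_zero hp (monotone_nat_of_le_succ hmono) he
      ((hbasis 1).tendsto_sum_basis he hne) h
    have hf : f = 0 := congrArg DFunLike.coe hφ
    exact ⟨hf ▸ continuous_zero, fun h => (h hf).elim⟩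
  · obtain ⟨n, hn⟩ := not_forall.1 h
    have hf : f = fun x => coef x n :=
      funext (φ.eq_of_mul_eq_smul (he.idem n) (fun x => (hbasis x).mul_basis he n) hn)
    refine ⟨?_, fun _ => ⟨n, hf⟩⟩
    exact hp.continuous_of_mul_eq_smul hsub hlin.mk' (hne n)
      fun x => by simpa [hf] using (hbasis x).mul_basis he n

/-- Main theorem: on a unital B₀-algebra with orthogonal basis, every multiplicative linear
functional is continuous, and every nonzero one is a coefficient functional. -/
theorem stmt14 {A : Type*} [Ring A] [Algebra ℂ A] [UniformSpace A] [T2Space A]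
    [IsUniformAddGroup A] [ContinuousSMul ℂ A] [CompleteSpace A]
    (p : ℕ → Seminorm ℂ A) (hp : WithSeminorms p)
    (hmono : ∀ i x, p i x ≤ p (i + 1) x)
    (hsub : ∀ i x y, p i (x * y) ≤ p (i + 1) x * p (i + 1) y)
    (e : ℕ → A) (coef : A → ℕ → ℂ)
    (horth : ∀ i j, e i * e j = if i = j then e i else 0)
    (hbasis : ∀ x, HasExpansion (coef x) e x)
    (huniq : ∀ x a, HasExpansion a e x → a = coef x) :
    ∀ f : A → ℂ, IsLinearMap ℂ f → (∀ x y, f (x * y) = f x * f y) →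
      Continuous f ∧ (f ≠ 0 → ∃ n, f = fun x => coef x n) :=
  stmt14_general p hp hmono hsub e coef horth hbasis huniq
end
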